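/- arXiv:2409.04396 — 3 statements merged into one kernel-verified Lean document; each statement's English description precedes it below -/
import Mathlib

section
/- Let H be a finite-dimensional complex inner product space, let A be a linear operator on H, and let (P_i) be a measurement on H such that A forms a story with (P_i). Then the adjoint A† also forms a story with (P_i), and the two operators yield identical Aharonov–Bergmann–Lebowitz probability distributions: for every index n, |Tr(P_n ∘ A†)|² / Σ_i |Tr(P_i ∘ A†)|² = |Tr(P_n ∘ A)|² / Σ_i |Tr(P_i ∘ A)|². In particular, |Tr(P_i ∘ A†)| = |Tr(P_i ∘ A)| for every i. -/
/-- A measurement on a finite-dimensional complex inner product space `E`: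
a finite family of self-adjoint idempotent linear maps (orthogonal projections)
that are mutually orthogonal and sum to the identity. -/
def IsMeasurement {E : Type*} [NormedAddCommGroup E] [InnerProductSpace ℂ E]
    [FiniteDimensional ℂ E] {m : ℕ} (P : Fin m → E →ₗ[ℂ] E) : Prop :=
  (∀ i, LinearMap.adjoint (P i) = P i) ∧
  (∀ i, P i ∘ₗ P i = P i) ∧
  (∀ i j, i ≠ j → P i ∘ₗ P j = 0) ∧
  (∑ i, P i) = LinearMap.id

lemma trace_adjoint_aux {E : Type*} [NormedAddCommGroup E] [InnerProductSpace ℂ E]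
    [FiniteDimensional ℂ E] (f : E →ₗ[ℂ] E) :
    LinearMap.trace ℂ E (LinearMap.adjoint f) = starRingEnd ℂ (LinearMap.trace ℂ E f) := by
  let b := stdOrthonormalBasis ℂ E
  rw [LinearMap.trace_eq_matrix_trace ℂ b.toBasis, LinearMap.trace_eq_matrix_trace ℂ b.toBasis,
    LinearMap.toMatrix_adjoint, Matrix.trace_conjTranspose]
  rfl

/-- The adjoint (time-reversed) operator forms a story with the same measurement and
yields the same Aharonov–Bergmann–Lebowitz probability distribution; in particular
the traces have the same absolute values. -/
theorem stmt9 {E : Type*} [NormedAddCommGroup E] [InnerProductSpace ℂ E]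
    [FiniteDimensional ℂ E] {m : ℕ} (P : Fin m → E →ₗ[ℂ] E)
    (hP : IsMeasurement P) (A : E →ₗ[ℂ] E)
    (hstory : ∃ i, LinearMap.trace ℂ E (P i ∘ₗ A) ≠ 0) :
    (∃ i, LinearMap.trace ℂ E (P i ∘ₗ LinearMap.adjoint A) ≠ 0) ∧
    (∀ n, ‖LinearMap.trace ℂ E (P n ∘ₗ LinearMap.adjoint A)‖ ^ 2 /
            ∑ i, ‖LinearMap.trace ℂ E (P i ∘ₗ LinearMap.adjoint A)‖ ^ 2
          = ‖LinearMap.trace ℂ E (P n ∘ₗ A)‖ ^ 2 /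
            ∑ i, ‖LinearMap.trace ℂ E (P i ∘ₗ A)‖ ^ 2) ∧
    (∀ i, ‖LinearMap.trace ℂ E (P i ∘ₗ LinearMap.adjoint A)‖
          = ‖LinearMap.trace ℂ E (P i ∘ₗ A)‖) := by
  have key : ∀ i, LinearMap.trace ℂ E (P i ∘ₗ LinearMap.adjoint A)
      = starRingEnd ℂ (LinearMap.trace ℂ E (P i ∘ₗ A)) := by
    intro i
    have h1 : P i ∘ₗ LinearMap.adjoint A = LinearMap.adjoint (A ∘ₗ P i) := by
      rw [LinearMap.adjoint_comp, hP.1 i]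
    rw [h1, trace_adjoint_aux, LinearMap.trace_comp_comm']
  have habs : ∀ i, ‖LinearMap.trace ℂ E (P i ∘ₗ LinearMap.adjoint A)‖
      = ‖LinearMap.trace ℂ E (P i ∘ₗ A)‖ := by
    intro i; rw [key i, Complex.norm_conj]
  refine ⟨?_, ?_, habs⟩
  · obtain ⟨i, hi⟩ := hstory
    exact ⟨i, by rw [key i]; simpa using hi⟩
  · intro n; simp only [habs]
end

section
/- Let H be a 2-dimensional complex inner product space with orthonormal basis {e₀, e₁}, let {P₁, P₂} be a measurement on H with both P₁ and P₂ nonzero, and let Ψ₁ and Ψ₂ be the orthogonal projections onto the spans of e₀ and e₁ respectively. Write p = ⟨e₀, P₁ e₀⟩ (a real number in [0,1]). Then the equally weighted statistical mixture of Ψ₁ and Ψ₂ assigns probability 1/2 to each outcome: (1/2)·|Tr(P₁∘Ψ₁)|²/(|Tr(P₁∘Ψ₁)|² + |Tr(P₂∘Ψ₁)|²) + (1/2)·|Tr(P₁∘Ψ₂)|²/(|Tr(P₁∘Ψ₂)|² + |Tr(P₂∘Ψ₂)|²) = 1/2, and similarly with P₁ and P₂ interchanged. -/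
/-- The orthogonal projection onto the span of `v`, as a linear operator on `E`. -/
noncomputable def projSpan {E : Type*} [NormedAddCommGroup E] [InnerProductSpace ℂ E]
    [FiniteDimensional ℂ E] (v : E) : E →ₗ[ℂ] E :=
  (ℂ ∙ v).subtype ∘ₗ (Submodule.orthogonalProjectionOnto (ℂ ∙ v)).toLinearMap

open LinearMap in
lemma trace_onb {E : Type*} [NormedAddCommGroup E] [InnerProductSpace ℂ E]
    [FiniteDimensional ℂ E] {n : ℕ} (e : OrthonormalBasis (Fin n) ℂ E) (T : E →ₗ[ℂ] E) :
    trace ℂ E T = ∑ i, (inner ℂ (e i) (T (e i)) : ℂ) := by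
  rw [trace_eq_matrix_trace ℂ e.toBasis, Matrix.trace]
  congr 1; ext i
  rw [Matrix.diag_apply, toMatrix_apply, OrthonormalBasis.coe_toBasis,
    ← OrthonormalBasis.repr_apply_apply, OrthonormalBasis.coe_toBasis_repr_apply]

lemma projSpan_onb {E : Type*} [NormedAddCommGroup E] [InnerProductSpace ℂ E]
    [FiniteDimensional ℂ E] {n : ℕ} (e : OrthonormalBasis (Fin n) ℂ E) (k i : Fin n) :
    projSpan (e k) (e i) = if i = k then e k else 0 := by
  simp only [projSpan, LinearMap.comp_apply, ContinuousLinearMap.coe_coe,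
    Submodule.coe_subtype]
  rw [show (((ℂ ∙ e k).orthogonalProjectionOnto (e i) : E)) = (ℂ ∙ e k).starProjection (e i) from rfl,
    Submodule.starProjection_unit_singleton ℂ (e.orthonormal.1 k)]
  rcases eq_or_ne i k with h | h
  · simp [h, e.orthonormal.1 k, inner_self_eq_norm_sq_to_K]
  · simp [h, e.orthonormal.2 (Ne.symm h)]

open LinearMap in
lemma trace_comp_projSpan {E : Type*} [NormedAddCommGroup E] [InnerProductSpace ℂ E]
    [FiniteDimensional ℂ E] {n : ℕ} (e : OrthonormalBasis (Fin n) ℂ E) (T : E →ₗ[ℂ] E)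
    (k : Fin n) :
    trace ℂ E (T ∘ₗ projSpan (e k)) = (inner ℂ (e k) (T (e k)) : ℂ) := by
  rw [trace_onb e]
  rw [Finset.sum_eq_single k]
  · simp [projSpan_onb]
  · intro i _ hik; simp [projSpan_onb, hik]
  · simp

open LinearMap in
lemma trace_proj {E : Type*} [NormedAddCommGroup E] [InnerProductSpace ℂ E]
    [FiniteDimensional ℂ E] (T : E →ₗ[ℂ] E) (h : T ∘ₗ T = T) :
    trace ℂ E T = (Module.finrank ℂ (LinearMap.range T) : ℂ) := by
  have hproj : IsProj (range T) T := by
    refine ⟨fun x => mem_range_self T x, ?_⟩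
    rintro x ⟨y, rfl⟩
    exact congrFun (congrArg DFunLike.coe h) y
  exact hproj.trace


/-- On a 2-dimensional space, the equally weighted statistical mixture of the separable
two-state vectors `|0⟩⊗⟨0|` and `|1⟩⊗⟨1|` assigns Aharonov–Bergmann–Lebowitz
probability `1/2` to each outcome of any two-outcome measurement with nonzero
projections. -/
theorem stmt12 {E : Type*} [NormedAddCommGroup E] [InnerProductSpace ℂ E]
    [FiniteDimensional ℂ E] (hdim : Module.finrank ℂ E = 2)
    (e : OrthonormalBasis (Fin 2) ℂ E)
    (P : Fin 2 → E →ₗ[ℂ] E) (hP : IsMeasurement P)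
    (hne : ∀ i, P i ≠ 0) :
    ((1 / 2) * (‖LinearMap.trace ℂ E (P 0 ∘ₗ projSpan (e 0))‖ ^ 2 /
        (‖LinearMap.trace ℂ E (P 0 ∘ₗ projSpan (e 0))‖ ^ 2 +
         ‖LinearMap.trace ℂ E (P 1 ∘ₗ projSpan (e 0))‖ ^ 2)) +
     (1 / 2) * (‖LinearMap.trace ℂ E (P 0 ∘ₗ projSpan (e 1))‖ ^ 2 /
        (‖LinearMap.trace ℂ E (P 0 ∘ₗ projSpan (e 1))‖ ^ 2 +
         ‖LinearMap.trace ℂ E (P 1 ∘ₗ projSpan (e 1))‖ ^ 2)) = 1 / 2) ∧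
    ((1 / 2) * (‖LinearMap.trace ℂ E (P 1 ∘ₗ projSpan (e 0))‖ ^ 2 /
        (‖LinearMap.trace ℂ E (P 0 ∘ₗ projSpan (e 0))‖ ^ 2 +
         ‖LinearMap.trace ℂ E (P 1 ∘ₗ projSpan (e 0))‖ ^ 2)) +
     (1 / 2) * (‖LinearMap.trace ℂ E (P 1 ∘ₗ projSpan (e 1))‖ ^ 2 /
        (‖LinearMap.trace ℂ E (P 0 ∘ₗ projSpan (e 1))‖ ^ 2 +
         ‖LinearMap.trace ℂ E (P 1 ∘ₗ projSpan (e 1))‖ ^ 2)) = 1 / 2) := by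
  obtain ⟨hadj, hid, -, hsum⟩ := hP
  have key : ∀ i k, (inner ℂ (e k) (P i (e k)) : ℂ) = ((‖P i (e k)‖ : ℝ)^2 : ℝ) := by
    intro i k
    conv_lhs => rw [← hid i, LinearMap.comp_apply, ← hadj i,
      LinearMap.adjoint_inner_right]
    rw [hadj i, inner_self_eq_norm_sq_to_K]
    norm_cast
  have hsum' : ∀ k, (inner ℂ (e k) (P 0 (e k)) : ℂ) + inner ℂ (e k) (P 1 (e k)) = 1 := by
    intro k
    rw [← inner_add_right, ← LinearMap.add_apply, ← Fin.sum_univ_two P, hsum]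
    simp [inner_self_eq_norm_sq_to_K, e.orthonormal.1 k]
  have habs : ∀ i k, ‖LinearMap.trace ℂ E (P i ∘ₗ projSpan (e k))‖
      = ‖P i (e k)‖^2 := by
    intro i k
    rw [trace_comp_projSpan, key, Complex.norm_real, Real.norm_eq_abs, abs_of_nonneg (by positivity)]
  set x := ‖P 0 (e 0)‖^2 with hx
  set y := ‖P 1 (e 0)‖^2 with hy
  set u := ‖P 0 (e 1)‖^2 with hu
  set v := ‖P 1 (e 1)‖^2 with hv
  have h1 : x + y = 1 := by
    have := hsum' 0; rw [key, key] at this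
    exact_mod_cast this
  have h2 : u + v = 1 := by
    have := hsum' 1; rw [key, key] at this
    exact_mod_cast this
  have hrank : ∀ i, 1 ≤ Module.finrank ℂ (LinearMap.range (P i)) := by
    intro i
    rw [Nat.one_le_iff_ne_zero]
    intro h
    exact hne i (LinearMap.range_eq_bot.mp (Submodule.finrank_eq_zero.mp h))
  have htr : ∀ i, LinearMap.trace ℂ E (P i) =
      (Module.finrank ℂ (LinearMap.range (P i)) : ℂ) := fun i => trace_proj _ (hid i)
  have htr2 : Module.finrank ℂ (LinearMap.range (P 0)) +
      Module.finrank ℂ (LinearMap.range (P 1)) = 2 := by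
    have : LinearMap.trace ℂ E (P 0) + LinearMap.trace ℂ E (P 1) = 2 := by
      rw [← map_add, ← Fin.sum_univ_two P, hsum, LinearMap.trace_id, hdim]
      norm_cast
    rw [htr 0, htr 1] at this
    exact_mod_cast this
  have hr0 : Module.finrank ℂ (LinearMap.range (P 0)) = 1 := by
    have := hrank 0; have := hrank 1; omega
  have h3 : x + u = 1 := by
    have h : LinearMap.trace ℂ E (P 0) = ((x + u : ℝ) : ℂ) := by
      rw [trace_onb e, Fin.sum_univ_two, key, key]; norm_cast
    rw [htr 0, hr0] at h
    have h' : ((x + u : ℝ) : ℂ) = ((1 : ℝ) : ℂ) := by rw [← h]; norm_num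
    exact_mod_cast h'
  have hux : u = y := by linarith
  have hvx : v = x := by linarith
  have hxn : 0 ≤ x := by positivity
  have hyn : 0 ≤ y := by positivity
  have hpos : 0 < x^2 + y^2 := by nlinarith [sq_nonneg (x - y)]
  rw [habs 0 0, habs 1 0, habs 0 1, habs 1 1, ← hx, ← hy, ← hu, ← hv, hux, hvx,
    show y^2 + x^2 = x^2 + y^2 from add_comm _ _]
  have hne' : x^2 + y^2 ≠ 0 := hpos.ne'
  constructor <;> · field_simp; try ring
end

section
/- There do not exist complex numbers α₀, α₁, α₂, β₀, β₁, β₂ satisfying simultaneously: (1) α₁β₁ + α₂β₂ = 0; (2) α₀β₀ + α₂β₂ = 0; (3) (1/2)α₀β₀ + (1/2)α₁β₁ − (1/2)α₀β₁ − (1/2)α₁β₀ + α₂β₂ = 0; (4) (1/2)α₀β₀ + (1/2)α₁β₁ − (i/2)α₀β₁ + (i/2)α₁β₀ + α₂β₂ = 0; and (5) α₀β₀ ≠ 0. Equivalently, any solution of equations (1)–(4) must have α₀β₀ = 0. -/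
/-- The system of algebraic conditions for a separable two-state vector to reproduce
the zero-probability outcomes of `(|0⟩⟨0| + |1⟩⟨1| − |2⟩⟨2|)/√3` under the four
measurements, together with the story condition `α₀β₀ ≠ 0`, is inconsistent. -/
theorem stmt14 :
    ¬ ∃ α₀ α₁ α₂ β₀ β₁ β₂ : ℂ,
      α₁ * β₁ + α₂ * β₂ = 0 ∧
      α₀ * β₀ + α₂ * β₂ = 0 ∧
      (1 / 2) * (α₀ * β₀) + (1 / 2) * (α₁ * β₁) - (1 / 2) * (α₀ * β₁)
        - (1 / 2) * (α₁ * β₀) + α₂ * β₂ = 0 ∧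
      (1 / 2) * (α₀ * β₀) + (1 / 2) * (α₁ * β₁) - (Complex.I / 2) * (α₀ * β₁)
        + (Complex.I / 2) * (α₁ * β₀) + α₂ * β₂ = 0 ∧
      α₀ * β₀ ≠ 0 := by
  rintro ⟨α₀, α₁, α₂, β₀, β₁, β₂, h1, h2, h3, h4, h5⟩
  have hs : α₀ * β₁ + α₁ * β₀ = 0 := by linear_combination h1 + h2 - 2 * h3
  have hd : α₀ * β₁ - α₁ * β₀ = 0 := by
    have := Complex.I_ne_zero
    have h4' : Complex.I * (α₀ * β₁ - α₁ * β₀) = 0 := by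
      linear_combination h1 + h2 - 2 * h4
    rcases mul_eq_zero.mp h4' with h | h
    · exact absurd h this
    · exact h
  have hab : α₀ * β₁ = 0 := by linear_combination (hs + hd) / 2
  have hba : α₁ * β₀ = 0 := by linear_combination (hs - hd) / 2
  have hsq : (α₀ * β₀) ^ 2 = 0 := by
    linear_combination (α₀ * β₀) * (h2 - h1) + (α₁ * β₀) * hab
  exact h5 (pow_eq_zero_iff (n := 2) (by norm_num) |>.mp hsq)
end
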